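/- Let τ be an imaginary quadratic algebraic integer with |τ| > 1 and V the Voronoi cell of 0 for the lattice Z[τ]. Then τ^{-1} V ⊆ V. -/

import Mathlib

/-!
Since `τ² = pτ - q`, the lattice `ℤ[τ] = ℤ + ℤτ` is stable under multiplication by `τ`.
For `y` in the lattice, `τ⁻¹ z - y = τ⁻¹ (z - τ y)` with `τ y` again in the lattice, so
dividing the Voronoi inequality `‖z‖ ≤ ‖z - τ y‖` by `‖τ‖` gives `‖τ⁻¹ z‖ ≤ ‖τ⁻¹ z - y‖`.
-/

section VoronoiCell

variable {𝕜 : Type*} [NormedDivisionRing 𝕜]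

def voronoiCell (L : Set 𝕜) : Set 𝕜 := {z | ∀ y ∈ L, ‖z‖ ≤ ‖z - y‖}

theorem inv_mul_mem_voronoiCell {L : Set 𝕜} {τ : 𝕜} (hL : ∀ y ∈ L, τ * y ∈ L) {z : 𝕜}
    (hz : z ∈ voronoiCell L) : τ⁻¹ * z ∈ voronoiCell L := by
  intro y hy
  rcases eq_or_ne τ 0 with rfl | hτ
  · simp
  calc ‖τ⁻¹ * z‖ = ‖τ⁻¹‖ * ‖z‖ := norm_mul _ _
    _ ≤ ‖τ⁻¹‖ * ‖z - τ * y‖ := by gcongr; exact hz _ (hL y hy)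
    _ = ‖τ⁻¹ * z - y‖ := by rw [← norm_mul, mul_sub, inv_mul_cancel_left₀ hτ]

end VoronoiCell

def intSpanOneAnd (τ : ℂ) : Set ℂ := Set.range fun ab : ℤ × ℤ => (ab.1 : ℂ) + (ab.2 : ℂ) * τ

theorem mul_mem_intSpanOneAnd {p q : ℤ} {τ : ℂ} (hτ : τ ^ 2 - (p : ℂ) * τ + (q : ℂ) = 0)
    {y : ℂ} (hy : y ∈ intSpanOneAnd τ) : τ * y ∈ intSpanOneAnd τ := by
  obtain ⟨⟨a, b⟩, rfl⟩ := hy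
  refine ⟨(-(b * q), a + b * p), ?_⟩
  push_cast
  linear_combination (-(b : ℂ)) * hτ

theorem voronoiCell_intSpanOneAnd (τ : ℂ) :
    voronoiCell (intSpanOneAnd τ) = {z : ℂ | ∀ a b : ℤ, ‖z‖ ≤ ‖z - ((a : ℂ) + (b : ℂ) * τ)‖} := by
  ext z
  simp only [voronoiCell, intSpanOneAnd, Set.mem_ofPred_eq, Set.forall_mem_range, Prod.forall]

theorem voronoi_cell_inv_smul_subset_general (p q : ℤ) (τ : ℂ)
    (hτ : τ ^ 2 - (p : ℂ) * τ + (q : ℂ) = 0) :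
    ∀ z ∈ {z : ℂ | ∀ a b : ℤ, ‖z‖ ≤ ‖z - ((a : ℂ) + (b : ℂ) * τ)‖},
      τ⁻¹ * z ∈ {z : ℂ | ∀ a b : ℤ, ‖z‖ ≤ ‖z - ((a : ℂ) + (b : ℂ) * τ)‖} := by
  rw [← voronoiCell_intSpanOneAnd]
  exact fun z => inv_mul_mem_voronoiCell fun _ => mul_mem_intSpanOneAnd hτ

/-- Let `τ` be an imaginary quadratic algebraic integer with `|τ| > 1` and `V` the Voronoi
cell of `0` for the lattice `ℤ[τ]`. Then `τ⁻¹ V ⊆ V`. -/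
theorem voronoi_cell_inv_smul_subset (p q : ℤ) (τ : ℂ)
    (hτ : τ ^ 2 - (p : ℂ) * τ + (q : ℂ) = 0) (hdisc : p ^ 2 < 4 * q)
    (habs : 1 < ‖τ‖) :
    ∀ z ∈ {z : ℂ | ∀ a b : ℤ, ‖z‖ ≤ ‖z - ((a : ℂ) + (b : ℂ) * τ)‖},
      τ⁻¹ * z ∈ {z : ℂ | ∀ a b : ℤ, ‖z‖ ≤ ‖z - ((a : ℂ) + (b : ℂ) * τ)‖} :=
  voronoi_cell_inv_smul_subset_general p q τ hτ
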